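/- Every chain (b_1, …, b_r) of integers with all b_i ≥ 2 that is of class T can be obtained from the chain (4) or from a chain of the form (3, 2, …, 2, 3) (with k ≥ 0 intermediate entries equal to 2) by finitely many applications of the two operations (b_1, …, b_r) ↦ (2, b_1, …, b_{r−1}, b_r + 1) and (b_1, …, b_r) ↦ (b_1 + 1, b_2, …, b_r, 2). -/

import Mathlib

/-- The Hirzebruch–Jung continued fraction value [c_1, …, c_t] of a list of
rationals, defined by [c_t] = c_t and [c_i, …, c_t] = c_i − 1/[c_{i+1}, …, c_t].
(For the empty list we set the value to 0; since 1/0 = 0 in ℚ, this gives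
`hj [c] = c`.) -/
def hj : List ℚ → ℚ
  | [] => 0
  | c :: rest => c - 1 / hj rest

/-- A chain (b_1, …, b_r) of integers with all b_i ≥ 2 is of class T if
[b_1, …, b_r] = dn²/(dna − 1) for some integers d ≥ 1, n ≥ 2, 1 ≤ a < n with
gcd(n, a) = 1. -/
def IsClassT (l : List ℤ) : Prop :=
  (∀ b ∈ l, 2 ≤ b) ∧
    ∃ d n a : ℤ, 1 ≤ d ∧ 2 ≤ n ∧ 1 ≤ a ∧ a < n ∧ Int.gcd n a = 1 ∧
      hj (l.map (fun b => (b : ℚ))) = (d * n ^ 2 : ℚ) / (d * n * a - 1)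

/-- One of the two operations generating class T chains:
(b_1, …, b_r) ↦ (2, b_1, …, b_{r−1}, b_r + 1) or
(b_1, …, b_r) ↦ (b_1 + 1, b_2, …, b_r, 2). -/
inductive TMove : List ℤ → List ℤ → Prop
  | left (l : List ℤ) (hne : l ≠ []) :
      TMove l (2 :: (l.dropLast ++ [l.getD (l.length - 1) 0 + 1]))
  | right (l : List ℤ) (hne : l ≠ []) :
      TMove l (((l.getD 0 0 + 1) :: l.tail) ++ [2])

/-!
Encode a chain `(b₁, …, b_r)` by the product `M` of the matrices `!![bᵢ, -1; 1, 0]`. Its first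
column is the fraction `[b₁, …, b_r] = p / q`, in lowest terms since `det M = 1`. For a class T
chain with data `(d, n, a)` this pins `M` down as `classTMatrix d n a`: the determinant fixes the
second column up to a multiple of the first, and the bounds satisfied by the reversed chain fix
that multiple. Comparing `p` with `2q` tells whether the first entry is `2` or at least `3`, and
reversal does the same for the last entry. The two moves multiply `M` by fixed unimodular matrices
on both sides and act on the data by `(n, a) ↦ (n + a, a)` and `(n, a) ↦ (2n - a, n)`. Hence if
`2a < n` the chain is a right move of a class T chain with data `(d, n - a, a)`, and if `n < 2a`
it is a left move of one with data `(d, a, 2a - n)`. Since `n` decreases, we end at `n = 2a`,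
where the data `(d, 2a, a)` and `(da², 2, 1)` give the same matrix, and the chains with that
matrix are `(4)` and `(3, 2, …, 2, 3)`.
-/

open Matrix

def hjMatrix (b : ℤ) : Matrix (Fin 2) (Fin 2) ℤ := !![b, -1; 1, 0]

def chainMatrix (l : List ℤ) : Matrix (Fin 2) (Fin 2) ℤ := (l.map hjMatrix).prod

@[simp]
lemma chainMatrix_nil : chainMatrix [] = 1 := rfl

@[simp]
lemma chainMatrix_cons (b : ℤ) (l : List ℤ) :
    chainMatrix (b :: l) = hjMatrix b * chainMatrix l := List.prod_cons

@[simp]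
lemma chainMatrix_append (l l' : List ℤ) :
    chainMatrix (l ++ l') = chainMatrix l * chainMatrix l' := by
  simp [chainMatrix]

@[simp]
lemma chainMatrix_singleton (b : ℤ) : chainMatrix [b] = hjMatrix b := mul_one _

lemma chainMatrix_cons_apply (b : ℤ) (l : List ℤ) :
    chainMatrix (b :: l) 0 0 = b * chainMatrix l 0 0 - chainMatrix l 1 0 ∧
      chainMatrix (b :: l) 1 0 = chainMatrix l 0 0 := by
  simp [hjMatrix, mul_apply, Fin.sum_univ_two]; ring

lemma det_chainMatrix (l : List ℤ) : (chainMatrix l).det = 1 := by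
  induction l with
  | nil => simp
  | cons b l ih => rw [chainMatrix_cons, det_mul, ih]; simp [hjMatrix]

lemma isCoprime_chainMatrix (l : List ℤ) :
    IsCoprime (chainMatrix l 0 0) (chainMatrix l 1 0) := by
  have hdet := det_chainMatrix l
  rw [det_fin_two] at hdet
  exact ⟨chainMatrix l 1 1, -chainMatrix l 0 1, by linarith⟩

lemma chainMatrix_reverse (l : List ℤ) :
    chainMatrix l.reverse = !![1, 0; 0, -1] * (chainMatrix l)ᵀ * !![1, 0; 0, -1] := by
  induction l with
  | nil => simp [← one_fin_two]
  | cons b l ih =>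
    have hflip : !![1, 0; 0, -1] * hjMatrix b = (hjMatrix b)ᵀ * !![1, 0; 0, -1] := by
      ext i j; fin_cases i <;> fin_cases j <;> simp [hjMatrix, mul_apply, Fin.sum_univ_two]
    rw [List.reverse_cons, chainMatrix_append, ih, chainMatrix_singleton, chainMatrix_cons,
      transpose_mul]
    simp only [mul_assoc, hflip]

lemma chainMatrix_bounds {l : List ℤ} (h2 : ∀ b ∈ l, 2 ≤ b) :
    0 ≤ chainMatrix l 1 0 ∧ chainMatrix l 1 0 < chainMatrix l 0 0 := by
  induction l with
  | nil => simp
  | cons b l ih =>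
    obtain ⟨hp, hq⟩ := chainMatrix_cons_apply b l
    obtain ⟨h0, h1⟩ := ih fun x hx => h2 x (by simp [hx])
    have hb := h2 b (by simp)
    constructor <;> nlinarith

lemma chainMatrix_one_zero_pos {l : List ℤ} (h2 : ∀ b ∈ l, 2 ≤ b) (hl : l ≠ []) :
    0 < chainMatrix l 1 0 := by
  obtain ⟨b, l, rfl⟩ := List.exists_cons_of_ne_nil hl
  rw [(chainMatrix_cons_apply b l).2]
  have := chainMatrix_bounds fun x hx => h2 x (List.mem_cons_of_mem b hx)
  omega

lemma chainMatrix_cons_bounds {b : ℤ} {l : List ℤ} (h2 : ∀ x ∈ b :: l, 2 ≤ x) :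
    (b - 1) * chainMatrix (b :: l) 1 0 < chainMatrix (b :: l) 0 0 ∧
      chainMatrix (b :: l) 0 0 ≤ b * chainMatrix (b :: l) 1 0 := by
  obtain ⟨hp, hq⟩ := chainMatrix_cons_apply b l
  obtain ⟨h0, h1⟩ := chainMatrix_bounds fun x hx => h2 x (List.mem_cons_of_mem b hx)
  rw [hp, hq]
  constructor <;> linarith

lemma head_eq_two_of_le {b : ℤ} {l : List ℤ} (h2 : ∀ x ∈ b :: l, 2 ≤ x)
    (h : chainMatrix (b :: l) 0 0 ≤ 2 * chainMatrix (b :: l) 1 0) : b = 2 := by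
  have hlo := (chainMatrix_cons_bounds h2).1
  have hQ := (chainMatrix_bounds h2).1
  have hb := h2 b List.mem_cons_self
  nlinarith

lemma three_le_head_of_lt {b : ℤ} {l : List ℤ} (h2 : ∀ x ∈ b :: l, 2 ≤ x)
    (h : 2 * chainMatrix (b :: l) 1 0 < chainMatrix (b :: l) 0 0) : 3 ≤ b := by
  have hhi := (chainMatrix_cons_bounds h2).2
  have hQ := (chainMatrix_bounds h2).1
  nlinarith

lemma hj_map_intCast {l : List ℤ} (h2 : ∀ b ∈ l, 2 ≤ b) :
    hj (l.map ((↑) : ℤ → ℚ)) = (chainMatrix l 0 0 : ℚ) / chainMatrix l 1 0 := by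
  induction l with
  | nil => simp [hj]
  | cons b l ih =>
    obtain ⟨hp, hq⟩ := chainMatrix_cons_apply b l
    have hpos : (0 : ℚ) < chainMatrix l 0 0 := by
      have := chainMatrix_bounds fun x hx => h2 x (List.mem_cons_of_mem b hx)
      exact_mod_cast this.1.trans_lt this.2
    rw [List.map_cons, hj, ih fun x hx => h2 x (List.mem_cons_of_mem b hx), hp, hq]
    field_simp
    push_cast
    ring

lemma exists_eq_cons_append_of_one_lt {l : List ℤ} (h : 1 < chainMatrix l 1 0) :
    ∃ b mid c, l = b :: (mid ++ [c]) := by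
  match l, h with
  | [], h => simp at h
  | [b], h => simp [hjMatrix] at h
  | b :: c :: l, _ =>
    exact ⟨b, (c :: l).dropLast, _, by rw [List.dropLast_append_getLast (List.cons_ne_nil c l)]⟩

lemma eq_replicate_two_append_three {l : List ℤ} (h2 : ∀ b ∈ l, 2 ≤ b) (hl : l ≠ [])
    (h : chainMatrix l 0 0 = chainMatrix l 1 0 + 2) :
    ∃ k : ℕ, l = List.replicate k 2 ++ [3] := by
  induction l with
  | nil => exact absurd rfl hl
  | cons c r ih =>
    obtain ⟨hp, hq⟩ := chainMatrix_cons_apply c r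
    rcases eq_or_ne r [] with rfl | hr
    · refine ⟨0, ?_⟩
      simp [hjMatrix] at h
      simp; omega
    · have h2r : ∀ x ∈ r, 2 ≤ x := fun x hx => h2 x (List.mem_cons_of_mem c hx)
      have hQ : 2 ≤ chainMatrix (c :: r) 1 0 := by
        have := chainMatrix_bounds h2r
        have := chainMatrix_one_zero_pos h2r hr
        omega
      have hc : c = 2 := head_eq_two_of_le h2 (by omega)
      subst hc
      obtain ⟨k, rfl⟩ := ih h2r hr (by omega)
      exact ⟨k + 1, by simp [List.replicate_succ]⟩

lemma Matrix.eq_of_mul_mul_eq {m R : Type*} [Fintype m] [DecidableEq m] [CommRing R]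
    {A B X Y : Matrix m m R} (hA : IsUnit A.det) (hB : IsUnit B.det)
    (h : A * X * B = A * Y * B) : X = Y :=
  ((isUnit_iff_isUnit_det A).2 hA).mul_left_cancel
    (((isUnit_iff_isUnit_det B).2 hB).mul_right_cancel h)

lemma chainMatrix_right_move (b : ℤ) (l : List ℤ) :
    chainMatrix ((b + 1) :: (l ++ [2])) = !![1, 1; 0, 1] * chainMatrix (b :: l) * hjMatrix 2 := by
  have : hjMatrix (b + 1) = !![1, 1; 0, 1] * hjMatrix b := by
    ext i j; fin_cases i <;> fin_cases j <;> simp [hjMatrix, mul_apply, Fin.sum_univ_two]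
  simp [this, mul_assoc]

lemma chainMatrix_left_move (l : List ℤ) (c : ℤ) :
    chainMatrix (2 :: (l ++ [c + 1])) = hjMatrix 2 * chainMatrix (l ++ [c]) * !![1, 0; -1, 1] := by
  have : hjMatrix (c + 1) = hjMatrix c * !![1, 0; -1, 1] := by
    ext i j; fin_cases i <;> fin_cases j <;> simp [hjMatrix, mul_apply, Fin.sum_univ_two]
  simp [this, mul_assoc]

lemma TMove.right_cons (b : ℤ) (l : List ℤ) : TMove (b :: l) ((b + 1) :: (l ++ [2])) :=
  TMove.right (b :: l) (List.cons_ne_nil b l)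

lemma TMove.left_concat (l : List ℤ) (c : ℤ) : TMove (l ++ [c]) (2 :: (l ++ [c + 1])) := by
  simpa using TMove.left (l ++ [c]) (by simp)

def classTMatrix (d n a : ℤ) : Matrix (Fin 2) (Fin 2) ℤ :=
  !![d * n ^ 2, 1 - d * n * (n - a); d * n * a - 1, 1 - d * a * (n - a)]

lemma classTMatrix_reverse (d n a : ℤ) :
    !![1, 0; 0, -1] * (classTMatrix d n a)ᵀ * !![1, 0; 0, -1] = classTMatrix d n (n - a) := by
  ext i j
  fin_cases i <;> fin_cases j <;>
    simp [classTMatrix, mul_apply, Fin.sum_univ_two, vecMul, dotProduct]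
  ring

lemma classTMatrix_right (d n a : ℤ) :
    !![1, 1; 0, 1] * classTMatrix d n a * hjMatrix 2 = classTMatrix d (n + a) a := by
  simp only [classTMatrix, hjMatrix, mul_fin_two, EmbeddingLike.apply_eq_iff_eq, vecCons_inj,
    and_true]
  refine ⟨⟨?_, ?_⟩, ?_, ?_⟩ <;> ring

lemma classTMatrix_left (d n a : ℤ) :
    hjMatrix 2 * classTMatrix d n a * !![1, 0; -1, 1] = classTMatrix d (2 * n - a) n := by
  simp only [classTMatrix, hjMatrix, mul_fin_two, EmbeddingLike.apply_eq_iff_eq, vecCons_inj,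
    and_true]
  refine ⟨⟨?_, ?_⟩, ?_, ?_⟩ <;> ring

lemma classTMatrix_two_mul (d a : ℤ) :
    classTMatrix d (2 * a) a = classTMatrix (d * a ^ 2) 2 1 := by
  simp only [classTMatrix]; ring_nf

lemma classTMatrix_zero_zero_sub (d n a : ℤ) :
    classTMatrix d n a 0 0 - 2 * classTMatrix d n a 1 0 = d * n * (n - 2 * a) + 2 := by
  simp [classTMatrix]; ring

lemma chainMatrix_reverse_eq {l : List ℤ} {d n a : ℤ}
    (hM : chainMatrix l = classTMatrix d n a) :
    chainMatrix l.reverse = classTMatrix d n (n - a) := by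
  rw [chainMatrix_reverse, hM, classTMatrix_reverse]

lemma chainMatrix_eq_of_right_move {b d n a : ℤ} {l : List ℤ}
    (h : chainMatrix ((b + 1) :: (l ++ [2])) = classTMatrix d (n + a) a) :
    chainMatrix (b :: l) = classTMatrix d n a := by
  rw [chainMatrix_right_move, ← classTMatrix_right] at h
  exact eq_of_mul_mul_eq (by simp) (by simp [hjMatrix]) h

lemma chainMatrix_eq_of_left_move {c d n a : ℤ} {l : List ℤ}
    (h : chainMatrix (2 :: (l ++ [c + 1])) = classTMatrix d (2 * n - a) n) :
    chainMatrix (l ++ [c]) = classTMatrix d n a := by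
  rw [chainMatrix_left_move, ← classTMatrix_left] at h
  exact eq_of_mul_mul_eq (by simp [hjMatrix]) (by simp) h

lemma chainMatrix_first_column_of_hj_eq {l : List ℤ} {d n a : ℤ} (h2 : ∀ b ∈ l, 2 ≤ b)
    (hd : 1 ≤ d) (ha : 1 ≤ a) (han : a < n)
    (hhj : hj (l.map ((↑) : ℤ → ℚ)) = (d * n ^ 2 : ℚ) / (d * n * a - 1)) :
    chainMatrix l 0 0 = d * n ^ 2 ∧ chainMatrix l 1 0 = d * n * a - 1 := by
  have hPpos : 0 < d * n ^ 2 := mul_pos (by omega) (pow_pos (by omega) 2)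
  have hQpos : 0 < d * n * a - 1 := by nlinarith [one_le_mul_of_one_le_of_one_le hd ha]
  rw [hj_map_intCast h2] at hhj
  have hpos : 0 < chainMatrix l 1 0 := by
    refine (chainMatrix_bounds h2).1.lt_of_ne fun h0 => ?_
    have : (0 : ℚ) < d * n ^ 2 / (d * n * a - 1) := by
      exact_mod_cast div_pos (Int.cast_pos.2 hPpos) (Int.cast_pos.2 hQpos : (0 : ℚ) < _)
    rw [← hhj, ← h0, Int.cast_zero, div_zero] at this
    exact this.false
  refine Rat.div_int_inj hpos hQpos (Int.isCoprime_iff_gcd_eq_one.mp (isCoprime_chainMatrix l))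
    (Int.isCoprime_iff_gcd_eq_one.mp ⟨d * a ^ 2, -(d * n * a + 1), by ring⟩) ?_
  rw [hhj]; push_cast; ring

lemma chainMatrix_eq_classTMatrix {l : List ℤ} {d n a : ℤ} (h2 : ∀ b ∈ l, 2 ≤ b)
    (hd : 1 ≤ d) (ha : 1 ≤ a) (han : a < n) (hP : chainMatrix l 0 0 = d * n ^ 2)
    (hQ : chainMatrix l 1 0 = d * n * a - 1) :
    chainMatrix l = classTMatrix d n a := by
  have hdet := det_chainMatrix l
  rw [det_fin_two, hP, hQ] at hdet
  have hU : chainMatrix l 0 1 = 1 - d * n * (n - a) := by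
    have hrev := chainMatrix_bounds (l := l.reverse) (by simpa using h2)
    simp [chainMatrix_reverse, mul_apply, Fin.sum_univ_two, vecMul, dotProduct, hP] at hrev
    have hdvd : d * n ^ 2 ∣ chainMatrix l 0 1 - (1 - d * n * (n - a)) := by
      rw [← hP]
      refine (isCoprime_chainMatrix l).dvd_of_dvd_mul_right
        ⟨chainMatrix l 1 1 - (1 - d * a * (n - a)), ?_⟩
      rw [hP, hQ]
      linear_combination -hdet
    have := Int.eq_zero_of_abs_lt_dvd hdvd (abs_sub_lt_iff.2 ⟨by nlinarith, by nlinarith⟩)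
    linarith
  have hV : chainMatrix l 1 1 = 1 - d * a * (n - a) := by
    rw [hU] at hdet
    have hP0 : d * n ^ 2 ≠ 0 := mul_ne_zero (by omega) (pow_ne_zero 2 (by omega))
    exact sub_eq_zero.1 <| (mul_eq_zero.1 (by linear_combination hdet)).resolve_left hP0
  ext i j
  fin_cases i <;> fin_cases j <;> simp [classTMatrix, hP, hQ, hU, hV]

lemma exists_tMove_of_two_mul_lt {l : List ℤ} {d n a : ℤ} (h2 : ∀ x ∈ l, 2 ≤ x)
    (hd : 1 ≤ d) (ha : 1 ≤ a) (h : 2 * a < n) (hM : chainMatrix l = classTMatrix d n a) :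
    ∃ l', (∀ x ∈ l', 2 ≤ x) ∧ chainMatrix l' = classTMatrix d (n - a) a ∧
      TMove l' l := by
  have hdn : 3 ≤ d * n := by nlinarith
  obtain ⟨b, mid, c, rfl⟩ := exists_eq_cons_append_of_one_lt (l := l) (by
    rw [hM]; simp [classTMatrix]; nlinarith)
  have hb : 3 ≤ b := three_le_head_of_lt h2 (by
    have := classTMatrix_zero_zero_sub d n a
    rw [hM]; nlinarith)
  have hrev : chainMatrix (c :: (mid.reverse ++ [b])) = classTMatrix d n (n - a) := by
    simpa using chainMatrix_reverse_eq hM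
  have h2rev : ∀ x ∈ c :: (mid.reverse ++ [b]), 2 ≤ x := fun x hx =>
    h2 x (by simp at hx ⊢; tauto)
  have hc : c = 2 := head_eq_two_of_le h2rev (by
    have := classTMatrix_zero_zero_sub d n (n - a)
    rw [hrev]; nlinarith)
  subst hc
  obtain ⟨b, rfl⟩ : ∃ b', b = b' + 1 := ⟨b - 1, by ring⟩
  refine ⟨b :: mid, fun x hx => ?_, chainMatrix_eq_of_right_move (by rwa [sub_add_cancel]),
    TMove.right_cons b mid⟩
  rcases List.mem_cons.1 hx with rfl | hx
  · omega
  · exact h2 x (by simp [hx])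

lemma exists_tMove_of_lt_two_mul {l : List ℤ} {d n a : ℤ} (h2 : ∀ x ∈ l, 2 ≤ x)
    (hd : 1 ≤ d) (han : a < n) (h : n < 2 * a) (hM : chainMatrix l = classTMatrix d n a) :
    ∃ l', (∀ x ∈ l', 2 ≤ x) ∧ chainMatrix l' = classTMatrix d a (2 * a - n) ∧
      TMove l' l := by
  have hdn : 2 ≤ d * n := by nlinarith
  obtain ⟨b, mid, c, rfl⟩ := exists_eq_cons_append_of_one_lt (l := l) (by
    rw [hM]; simp [classTMatrix]; nlinarith)
  have hb : b = 2 := head_eq_two_of_le h2 (by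
    have := classTMatrix_zero_zero_sub d n a
    rw [hM]; nlinarith)
  have hrev : chainMatrix (c :: (mid.reverse ++ [b])) = classTMatrix d n (n - a) := by
    simpa using chainMatrix_reverse_eq hM
  have h2rev : ∀ x ∈ c :: (mid.reverse ++ [b]), 2 ≤ x := fun x hx =>
    h2 x (by simp at hx ⊢; tauto)
  have hc : 3 ≤ c := three_le_head_of_lt h2rev (by
    have := classTMatrix_zero_zero_sub d n (n - a)
    rw [hrev]; nlinarith)
  subst hb
  obtain ⟨c, rfl⟩ : ∃ c', c = c' + 1 := ⟨c - 1, by ring⟩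
  refine ⟨mid ++ [c], fun x hx => ?_,
    chainMatrix_eq_of_left_move (by rwa [show 2 * a - (2 * a - n) = n by ring]),
    TMove.left_concat mid c⟩
  rcases List.mem_append.1 hx with hx | hx
  · exact h2 x (by simp [hx])
  · rw [List.mem_singleton.1 hx]; omega

def IsBaseChain (l : List ℤ) : Prop :=
  l = [4] ∨ ∃ k : ℕ, l = 3 :: (List.replicate k 2 ++ [3])

lemma isBaseChain_of_chainMatrix_eq {l : List ℤ} {d : ℤ} (h2 : ∀ b ∈ l, 2 ≤ b)
    (hd : 1 ≤ d) (hM : chainMatrix l = classTMatrix d 2 1) : IsBaseChain l := by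
  have hP : chainMatrix l 0 0 = 4 * d := by rw [hM]; simp [classTMatrix]; ring
  have hQ : chainMatrix l 1 0 = 2 * d - 1 := by rw [hM]; simp [classTMatrix]; ring
  obtain ⟨b, t, rfl⟩ := List.exists_cons_of_ne_nil (l := l) (by rintro rfl; simp at hP; omega)
  obtain ⟨hp, hq⟩ := chainMatrix_cons_apply b t
  rcases eq_or_ne t [] with rfl | ht
  · left
    simp [hjMatrix] at hP hQ
    simp; omega
  · right
    have h2t : ∀ x ∈ t, 2 ≤ x := fun x hx => h2 x (List.mem_cons_of_mem b hx)
    have hQ2 : 2 ≤ chainMatrix t 0 0 := by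
      have := chainMatrix_bounds h2t
      have := chainMatrix_one_zero_pos h2t ht
      omega
    obtain ⟨hlo, hhi⟩ := chainMatrix_cons_bounds h2
    have hb : b = 3 := by nlinarith
    subst hb
    obtain ⟨k, rfl⟩ := eq_replicate_two_append_three h2t ht (by omega)
    exact ⟨k, rfl⟩

theorem exists_isBaseChain_reflTransGen_of_chainMatrix_eq {l : List ℤ} {d n a : ℤ}
    (h2 : ∀ x ∈ l, 2 ≤ x) (hd : 1 ≤ d) (ha : 1 ≤ a) (han : a < n)
    (hM : chainMatrix l = classTMatrix d n a) :
    ∃ l₀, IsBaseChain l₀ ∧ Relation.ReflTransGen TMove l₀ l := by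
  rcases lt_trichotomy (2 * a) n with h | rfl | h
  · obtain ⟨l', h2', hM', hmove⟩ := exists_tMove_of_two_mul_lt h2 hd ha h hM
    obtain ⟨l₀, hl₀, hpath⟩ :=
      exists_isBaseChain_reflTransGen_of_chainMatrix_eq h2' hd ha (by omega) hM'
    exact ⟨l₀, hl₀, hpath.tail hmove⟩
  · rw [classTMatrix_two_mul] at hM
    exact ⟨l, isBaseChain_of_chainMatrix_eq h2 (by nlinarith) hM, .refl⟩
  · obtain ⟨l', h2', hM', hmove⟩ := exists_tMove_of_lt_two_mul h2 hd han h hM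
    obtain ⟨l₀, hl₀, hpath⟩ :=
      exists_isBaseChain_reflTransGen_of_chainMatrix_eq h2' hd (by omega) (by omega) hM'
    exact ⟨l₀, hl₀, hpath.tail hmove⟩
termination_by n.toNat
decreasing_by all_goals omega

theorem classT_generated_general (l : List ℤ) (hT : IsClassT l) :
    ∃ l₀ : List ℤ,
      (l₀ = [4] ∨ ∃ k : ℕ, l₀ = (3 : ℤ) :: (List.replicate k 2 ++ [3])) ∧
        Relation.ReflTransGen TMove l₀ l := by
  obtain ⟨h2, d, n, a, hd, -, ha, han, -, hhj⟩ := hT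
  -- the coercion `fun b => (b : ℚ)` in `IsClassT` elaborates through the list monad
  have hcast : l.map (fun b => (b : ℚ)) = l.map ((↑) : ℤ → ℚ) :=
    (List.map_id _).trans (List.flatMap_pure_eq_map _ l)
  obtain ⟨hP, hQ⟩ := chainMatrix_first_column_of_hj_eq h2 hd ha han (hcast ▸ hhj)
  exact exists_isBaseChain_reflTransGen_of_chainMatrix_eq h2 hd ha han
    (chainMatrix_eq_classTMatrix h2 hd ha han hP hQ)

/-- Every chain of integers ≥ 2 that is of class T can be obtained from (4) or
from some (3, 2, …, 2, 3) (with k ≥ 0 intermediate entries 2) by finitely many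
applications of the two operations. -/
theorem classT_generated (l : List ℤ) (h2 : ∀ b ∈ l, 2 ≤ b) (hT : IsClassT l) :
    ∃ l₀ : List ℤ,
      (l₀ = [4] ∨ ∃ k : ℕ, l₀ = (3 : ℤ) :: (List.replicate k 2 ++ [3])) ∧
        Relation.ReflTransGen TMove l₀ l :=
  classT_generated_general l hT
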